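/- For every fixed c < 1, the limit of f_θ(c) = a(θ)·(exp(−θ·c) − 1) as θ → −∞ equals 0; i.e., for large negative θ the KerBS kernel profile vanishes at every cosine similarity strictly below 1, so the kernel concentrates its mass near perfect alignment. -/

import Mathlib

/-! Substituting `t = -θ` and multiplying numerator and denominator by `exp (-t)`, the profile
becomes `t (exp (-(1 - c) t) - exp (-t)) / (2 (1 - (t + 1) exp (-t)))`. Since `1 - c > 0`, both
terms of the numerator decay like `t exp (-b t)` with `b > 0`, while the denominator tends to `2`. -/

open Real Filter Topology

lemma tendsto_mul_exp_neg_mul_atTop_nhds_zero {b : ℝ} (hb : 0 < b) :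
    Tendsto (fun t : ℝ => t * exp (-b * t)) atTop (𝓝 0) :=
  (tendsto_rpow_mul_exp_neg_mul_atTop_nhds_zero 1 b hb).congr fun t => by rw [rpow_one]

lemma tendsto_one_sub_add_one_mul_exp_neg_atTop :
    Tendsto (fun t : ℝ => 1 - (t + 1) * exp (-t)) atTop (𝓝 1) := by
  have h : Tendsto (fun t : ℝ => t * exp (-1 * t) + exp (-t)) atTop (𝓝 0) := by
    simpa using (tendsto_mul_exp_neg_mul_atTop_nhds_zero one_pos).add tendsto_exp_neg_atTop_nhds_zero
  simpa [add_mul] using h.const_sub 1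

/-- Holds for every `t`: at `t = 0` both denominators vanish and both sides are `0`. -/
lemma kerbs_profile_neg_eq (c t : ℝ) :
    t / (2 * (exp t - t - 1)) * (exp (t * c) - 1)
      = (t * exp (-(1 - c) * t) - t * exp (-1 * t)) / (2 * (1 - (t + 1) * exp (-t))) := by
  have hexp : exp t * exp (-t) = 1 := by rw [← exp_add, add_neg_cancel, exp_zero]
  rw [div_mul_eq_mul_div, ← mul_div_mul_right _ _ (exp_pos (-t)).ne']
  congr 1
  · rw [mul_assoc, sub_mul, ← exp_add, one_mul, neg_one_mul]
    ring_nf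
  · linear_combination 2 * hexp

/-- For every fixed `c < 1`, the limit of `f_θ(c) = a(θ)·(exp(-θ·c) − 1)` as
`θ → -∞` equals `0`, where `a(θ) = -θ/(2(exp(-θ)+θ-1))`: for large negative `θ`
the KerBS kernel profile vanishes at every cosine similarity strictly below `1`. -/
theorem kerbs_profile_tendsto_zero_atBot (c : ℝ) (hc : c < 1) :
    Tendsto (fun θ : ℝ =>
        (-θ / (2 * (Real.exp (-θ) + θ - 1))) * (Real.exp (-θ * c) - 1))
      atBot (𝓝 0) := by
  have hnum : Tendsto (fun t : ℝ => t * exp (-(1 - c) * t) - t * exp (-1 * t)) atTop (𝓝 0) := by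
    simpa using (tendsto_mul_exp_neg_mul_atTop_nhds_zero (sub_pos.mpr hc)).sub
      (tendsto_mul_exp_neg_mul_atTop_nhds_zero one_pos)
  have hprofile := (hnum.div (tendsto_one_sub_add_one_mul_exp_neg_atTop.const_mul 2)
    (by norm_num)).comp tendsto_neg_atBot_atTop
  rw [zero_div] at hprofile
  refine hprofile.congr fun θ => ?_
  rw [Function.comp_apply, Pi.div_apply, ← kerbs_profile_neg_eq, sub_neg_eq_add]
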